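/- arXiv:2107.01450 — 2 statements merged into one kernel-verified Lean document; each statement's English description precedes it below -/
import Mathlib

section
/- Let C < ∞ and let (f_N)_{N∈ℕ} be measurable functions f_N : (−2,2) → [0,C]. Suppose g : (−2,2) → (0,∞) is continuous and strictly positive, and that for every compact interval J ⊂ (−2,2), lim_{N→∞} ∫_J f_N(E) dE = ∫_J g(E) dE. Then for almost every E ∈ (−2,2), limsup_{N→∞} f_N(E) > 0. -/
/-!
Let `A` be the set of points of `(-2, 2)` where `limsup_N f_N = 0`; there `f_N → 0`, so by
dominated convergence `∫_J g = lim_N ∫_J f_N ≤ C |J \ A|` for every compact interval `J`.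
If `A` had positive measure, it would have a Lebesgue density point `x`. On small intervals
`J` around `x` the continuity of `g` gives `∫_J g ≥ g(x) |J| / 2`, while `|J \ A| = o(|J|)`,
a contradiction.
-/

open MeasureTheory Filter Set Topology Metric

theorem tendsto_zero_of_limsup_nonpos {ι : Type*} {l : Filter ι} {u : ι → ℝ}
    (h0 : ∀ᶠ i in l, 0 ≤ u i) (hbdd : IsBoundedUnder (· ≤ ·) l u) (h : limsup u l ≤ 0) :
    Tendsto u l (𝓝 0) :=
  tendsto_order.2 ⟨fun _ ha => h0.mono fun _ hi => ha.trans_le hi,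
    fun _ hb => eventually_lt_of_limsup_lt (h.trans_lt hb) hbdd⟩

theorem le_mul_measureReal_compl_of_tendsto_integral {α ι : Type*} [MeasurableSpace α]
    {μ : Measure α} [IsFiniteMeasure μ] {l : Filter ι} [l.IsCountablyGenerated] [l.NeBot]
    {f : ι → α → ℝ} {A : Set α} {C L : ℝ} (hA : MeasurableSet A)
    (hf : ∀ i, AEStronglyMeasurable (f i) μ) (hbound : ∀ i, ∀ᵐ x ∂μ, ‖f i x‖ ≤ C)
    (hzero : ∀ᵐ x ∂μ, x ∈ A → Tendsto (fun i => f i x) l (𝓝 0))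
    (hlim : Tendsto (fun i => ∫ x, f i x ∂μ) l (𝓝 L)) :
    L ≤ C * μ.real Aᶜ := by
  have hA_lim : Tendsto (fun i => ∫ x in A, f i x ∂μ) l (𝓝 0) := by
    simpa using tendsto_integral_filter_of_dominated_convergence (fun _ => C)
      (.of_forall fun i => (hf i).restrict) (.of_forall fun i => ae_restrict_of_ae (hbound i))
      (integrable_const C) ((ae_restrict_iff' hA).2 hzero)
  have hAc_le : ∀ i, ∫ x in Aᶜ, f i x ∂μ ≤ C * μ.real Aᶜ := fun i =>
    (le_abs_self _).trans <| norm_setIntegral_le_of_norm_le_const_ae (measure_lt_top μ _)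
      (ae_restrict_of_ae (hbound i))
  refine le_of_tendsto_of_tendsto' hlim (by simpa using hA_lim.add_const (C * μ.real Aᶜ))
    fun i => ?_
  rw [← integral_add_compl hA (Integrable.of_bound (hf i) C (hbound i))]
  exact add_le_add_right (hAc_le i) _

theorem ae_tendsto_measure_compl_inter_div {β : Type*} [MetricSpace β] [MeasurableSpace β]
    [BorelSpace β] [SecondCountableTopology β] [HasBesicovitchCovering β] (μ : Measure β)
    [IsLocallyFiniteMeasure μ] {A : Set β} (hA : MeasurableSet A) :
    ∀ᵐ x ∂μ.restrict A,
      Tendsto (fun r => μ (Aᶜ ∩ closedBall x r) / μ (closedBall x r)) (𝓝[>] 0) (𝓝 0) := by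
  filter_upwards [ae_restrict_of_ae (Besicovitch.ae_tendsto_measure_inter_div_of_measurableSet μ
    hA.compl), ae_restrict_mem hA] with x hx hxA
  simpa [hxA] using hx

theorem eventually_measureReal_closedBall_diff_le {A : Set ℝ} {x : ℝ}
    (hx : Tendsto (fun r => volume (Aᶜ ∩ closedBall x r) / volume (closedBall x r))
      (𝓝[>] 0) (𝓝 0)) {ε : ℝ} (hε : 0 < ε) :
    ∀ᶠ r in 𝓝[>] 0, volume.real (closedBall x r \ A) ≤ ε * (2 * r) := by
  filter_upwards [hx.eventually (gt_mem_nhds (ENNReal.ofReal_pos.2 hε)), self_mem_nhdsWithin]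
    with r hr (hr0 : 0 < r)
  rw [Real.volume_closedBall, ENNReal.div_lt_iff (Or.inl (by simpa using hr0))
    (Or.inl ENNReal.ofReal_ne_top), ← ENNReal.ofReal_mul hε.le, inter_comm, ← sdiff_eq] at hr
  exact ENNReal.toReal_le_of_le_ofReal (by positivity) hr.le

theorem volume_eq_zero_of_intervalIntegral_le {a b C : ℝ} {g : ℝ → ℝ} {A : Set ℝ}
    (hA : MeasurableSet A) (hAI : A ⊆ Ioo a b) (hC : 0 ≤ C) (hg : ContinuousOn g (Ioo a b))
    (hgpos : ∀ x ∈ Ioo a b, 0 < g x)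
    (h : ∀ c d, a < c → c ≤ d → d < b → ∫ x in c..d, g x ≤ C * volume.real (Ioc c d \ A)) :
    volume A = 0 := by
  by_contra hA0
  have := ae_restrict_neBot.2 hA0
  obtain ⟨x, hx_dens, hxA⟩ :=
    ((ae_tendsto_measure_compl_inter_div volume hA).and (ae_restrict_mem hA)).exists
  have hxI := hAI hxA
  have hgx := hgpos x hxI
  obtain ⟨ε, hε, hCε⟩ := exists_pos_mul_lt (half_pos hgx) C
  have hnear : {y | y ∈ Ioo a b ∧ g x / 2 < g y} ∈ 𝓝 x :=
    inter_mem (isOpen_Ioo.mem_nhds hxI) ((hg.continuousAt (isOpen_Ioo.mem_nhds hxI)).eventually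
      (lt_mem_nhds (half_lt_self hgx)))
  obtain ⟨r, hr_ball, hr_diff, hr0 : 0 < r⟩ :=
    ((eventually_nhdsWithin_of_eventually_nhds (eventually_closedBall_subset hnear)).and
      ((eventually_measureReal_closedBall_diff_le hx_dens hε).and self_mem_nhdsWithin)).exists
  rw [Real.closedBall_eq_Icc] at hr_ball hr_diff
  have hrr : x - r ≤ x + r := by linarith
  have hlower : (x + r - (x - r)) * (g x / 2) ≤ ∫ y in (x - r)..(x + r), g y := by
    simpa only [intervalIntegral.integral_const, smul_eq_mul] using
      intervalIntegral.integral_mono_on hrr (intervalIntegrable_const (μ := volume))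
      ((hg.mono fun y hy => (hr_ball hy).1).intervalIntegrable_of_Icc hrr)
      fun y hy => (hr_ball hy).2.le
  have hupper := h (x - r) (x + r) (hr_ball ⟨le_rfl, hrr⟩).1.1 hrr (hr_ball ⟨hrr, le_rfl⟩).1.2
  have hdiff : volume.real (Ioc (x - r) (x + r) \ A) ≤ ε * (2 * r) :=
    (measureReal_mono (sdiff_subset_sdiff_left Ioc_subset_Icc_self)
      ((measure_mono sdiff_subset).trans_lt measure_Icc_lt_top).ne).trans hr_diff
  refine lt_irrefl ((2 * r) * (g x / 2)) ?_
  calc (2 * r) * (g x / 2) = (x + r - (x - r)) * (g x / 2) := by ring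
    _ ≤ C * volume.real (Ioc (x - r) (x + r) \ A) := hlower.trans hupper
    _ ≤ C * (ε * (2 * r)) := mul_le_mul_of_nonneg_left hdiff hC
    _ = (C * ε) * (2 * r) := by ring
    _ < (g x / 2) * (2 * r) := mul_lt_mul_of_pos_right hCε (by positivity)
    _ = (2 * r) * (g x / 2) := by ring

/-- Let `C < ∞` and let `f_N : (-2,2) → [0,C]` be measurable. If
`g : (-2,2) → (0,∞)` is continuous and strictly positive and
`∫_J f_N(E) dE → ∫_J g(E) dE` for every compact interval `J ⊂ (-2,2)`, then for almost every
`E ∈ (-2,2)`, `limsup_N f_N(E) > 0`. -/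
theorem statement_9
    (C : ℝ) (f : ℕ → ℝ → ℝ)
    (hmeas : ∀ N, Measurable (f N))
    (hrange : ∀ N, ∀ E ∈ Set.Ioo (-2 : ℝ) 2, f N E ∈ Set.Icc (0 : ℝ) C)
    (g : ℝ → ℝ)
    (hgcont : ContinuousOn g (Set.Ioo (-2 : ℝ) 2))
    (hgpos : ∀ E ∈ Set.Ioo (-2 : ℝ) 2, 0 < g E)
    (hconv : ∀ c d : ℝ, -2 < c → c ≤ d → d < 2 →
      Tendsto (fun N => ∫ E in c..d, f N E) atTop (nhds (∫ E in c..d, g E))) :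
    ∀ᵐ E ∂(volume.restrict (Set.Ioo (-2 : ℝ) 2)),
      0 < Filter.limsup (fun N => f N E) atTop := by
  set A := Ioo (-2 : ℝ) 2 ∩ {E | limsup (fun N => f N E) atTop ≤ 0}
  have hA : MeasurableSet A :=
    measurableSet_Ioo.inter (measurableSet_le (.limsup hmeas) measurable_const)
  have hC : 0 ≤ C := (hrange 0 0 (by norm_num)).1.trans (hrange 0 0 (by norm_num)).2
  have hbound : ∀ N, ∀ E ∈ Ioo (-2 : ℝ) 2, ‖f N E‖ ≤ C := fun N E hE =>
    (Real.norm_of_nonneg (hrange N E hE).1).trans_le (hrange N E hE).2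
  have hzero : ∀ E ∈ A, Tendsto (fun N => f N E) atTop (𝓝 0) := fun E hE =>
    tendsto_zero_of_limsup_nonpos (.of_forall fun N => (hrange N E hE.1).1)
      (isBoundedUnder_of ⟨C, fun N => (hrange N E hE.1).2⟩) hE.2
  have hA0 : volume A = 0 := by
    refine volume_eq_zero_of_intervalIntegral_le hA inter_subset_left hC hgcont hgpos
      fun c d hc hcd hd => ?_
    have hJ : Ioc c d ⊆ Ioo (-2) 2 := (Ioc_subset_Ioo_right hd).trans (Ioo_subset_Ioo_left hc.le)
    have := le_mul_measureReal_compl_of_tendsto_integral (μ := volume.restrict (Ioc c d)) hA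
      (fun N => (hmeas N).aestronglyMeasurable)
      (fun N => ae_restrict_of_forall_mem measurableSet_Ioc fun E hE => hbound N E (hJ hE))
      (ae_of_all _ hzero)
      (by simpa only [intervalIntegral.integral_of_le hcd] using hconv c d hc hcd hd)
    rwa [measureReal_restrict_apply hA.compl, inter_comm, ← sdiff_eq,
      ← intervalIntegral.integral_of_le hcd] at this
  rw [ae_iff, Measure.restrict_apply' measurableSet_Ioo]
  refine measure_mono_null (fun E hE => ?_) hA0
  exact ⟨hE.2, not_lt.1 hE.1⟩
end

section
/- Let H_L^N be the random band matrix of size 2N+1 and band width 2L+1 with L = ⌊N^α⌋. Assume hypothesis [H2] with exponents μ and σ, and fix β with αμ < β < 1 and α < β. Then for every z ∈ ℂ with Im z > 0, lim_{N→∞} (2N+1)^{−1} E[ Im Tr (H_L^N − z)^{−1} − Σ_{p=1}^{N_β} Im Tr (H_L^{p,N} − z)^{−1} ] = 0, where H_L^{p,N}, p = 1, …, N_β, are the principal submatrices of H_L^N on the N_β consecutive blocks of size 2⌊N^β⌋+1. -/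
open MeasureTheory ProbabilityTheory Filter

noncomputable section

/-- The integer index in `[-N, N]` corresponding to `i : Fin (2N+1)`. -/
def idx (N : ℕ) (i : Fin (2 * N + 1)) : ℤ := (i : ℤ) - (N : ℤ)

/-- The `(2N+1) × (2N+1)` random band matrix of band width `2L+1` built from entries `X`. -/
def bandMatrix (X : ℤ → ℤ → ℝ) (N L : ℕ) : Matrix (Fin (2 * N + 1)) (Fin (2 * N + 1)) ℝ :=
  Matrix.of fun i j =>
    if |idx N i - idx N j| ≤ (L : ℤ) then X (idx N i) (idx N j) / Real.sqrt (2 * L + 1) else 0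

/-- The band half-width `L = ⌊N^α⌋`. -/
def bandL (α : ℝ) (N : ℕ) : ℕ := Nat.floor ((N : ℝ) ^ α)

/-- The principal submatrix of `H` corresponding to the `p`-th consecutive block of size `B`
(blocks are numbered `p = 0, 1, …`; when `B` divides `2N+1` and `p < (2N+1)/B`, the `%` below
is the identity on the relevant indices and this is the honest principal submatrix). -/
def blockSub (N B p : ℕ) (H : Matrix (Fin (2 * N + 1)) (Fin (2 * N + 1)) ℝ) :
    Matrix (Fin B) (Fin B) ℝ :=
  Matrix.of fun q r =>
    H ⟨(p * B + (q : ℕ)) % (2 * N + 1), Nat.mod_lt _ (by omega)⟩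
      ⟨(p * B + (r : ℕ)) % (2 * N + 1), Nat.mod_lt _ (by omega)⟩

/-- `Im Tr (H - z)⁻¹` for a real matrix `H` and `z ∈ ℂ`. -/
def imTrResolvent {n : ℕ} (H : Matrix (Fin n) (Fin n) ℝ) (z : ℂ) : ℝ :=
  (Matrix.trace ((H.map (fun x : ℝ => (x : ℂ)) - z • (1 : Matrix (Fin n) (Fin n) ℂ))⁻¹)).im

/-!
Write `D` for the block-diagonal part of `H = H_L^N`. Its resolvent trace is the sum of the
resolvent traces of the blocks, and the resolvent identity
`(H - z)⁻¹ - (D - z)⁻¹ = (H - z)⁻¹ (D - H) (D - z)⁻¹`, together with `‖(A - z)⁻¹‖ ≤ 1 / Im z` for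
Hermitian `A`, gives `|Tr (H - z)⁻¹ - Tr (D - z)⁻¹| ≤ √(2N+1) ‖H - D‖_HS / (Im z)²`.
An entry of `H - D` is nonzero only if its row lies within `L` of a block boundary, so
`𝔼 ‖H - D‖_HS² ≤ N_β · 2L`, as every entry in the band has second moment `1 / (2L+1)`.
By Jensen the normalised expectation is at most `√(2L N_β / (2N+1)) / (Im z)²`, which is of
order `N^((α - β) / 2)`.
-/

open Matrix Finset

section HermitianResolvent

open WithLp
open scoped Matrix.Norms.L2Operator

theorem LinearMap.IsSymmetric.abs_im_mul_norm_le {E : Type*} [NormedAddCommGroup E]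
    [InnerProductSpace ℂ E] {T : E →ₗ[ℂ] E} (hT : T.IsSymmetric) (z : ℂ) (x : E) :
    |z.im| * ‖x‖ ≤ ‖T x - z • x‖ := by
  rcases (norm_nonneg x).eq_or_lt with hx | hx
  · rw [← hx, mul_zero]; exact norm_nonneg _
  have him : (inner ℂ x (T x - z • x)).im = -(z.im * ‖x‖ ^ 2) := by
    have h0 : (inner ℂ x (T x)).im = 0 := hT.im_inner_self_apply x
    rw [inner_sub_right, inner_smul_right, inner_self_eq_norm_sq_to_K, Complex.sub_im, h0]
    simp [Complex.mul_im, ← Complex.ofReal_pow]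
  have key : |z.im| * ‖x‖ ^ 2 ≤ ‖x‖ * ‖T x - z • x‖ :=
    calc |z.im| * ‖x‖ ^ 2 = |(inner ℂ x (T x - z • x)).im| := by
          rw [him, abs_neg, abs_mul, abs_of_nonneg (sq_nonneg ‖x‖)]
      _ ≤ ‖inner ℂ x (T x - z • x)‖ := Complex.abs_im_le_norm _
      _ ≤ ‖x‖ * ‖T x - z • x‖ := norm_inner_le_norm _ _
  nlinarith

variable {n : Type*} [Fintype n]

theorem Matrix.norm_trace_mul_le (E F : Matrix n n ℂ) :
    ‖trace (E * F)‖ ≤ √(∑ i, ∑ j, ‖E i j‖ ^ 2) * √(∑ i, ∑ j, ‖F i j‖ ^ 2) := by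
  have hF : ∑ p : n × n, ‖F p.2 p.1‖ ^ 2 = ∑ i, ∑ j, ‖F i j‖ ^ 2 := by
    rw [Fintype.sum_prod_type, Finset.sum_comm]
  calc ‖trace (E * F)‖ = ‖∑ i, ∑ j, E i j * F j i‖ := rfl
    _ ≤ ∑ i, ∑ j, ‖E i j‖ * ‖F j i‖ := (norm_sum_le _ _).trans <|
        sum_le_sum fun i _ => (norm_sum_le _ _).trans_eq (by simp only [norm_mul])
    _ = ∑ p : n × n, ‖E p.1 p.2‖ * ‖F p.2 p.1‖ := by rw [Fintype.sum_prod_type]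
    _ ≤ √(∑ p : n × n, ‖E p.1 p.2‖ ^ 2) * √(∑ p : n × n, ‖F p.2 p.1‖ ^ 2) :=
        Real.sum_mul_le_sqrt_mul_sqrt _ _ _
    _ = _ := by rw [hF, Fintype.sum_prod_type]

variable [DecidableEq n]

theorem Matrix.IsHermitian.abs_im_mul_norm_le {A : Matrix n n ℂ} (hA : A.IsHermitian) (z : ℂ)
    (x : EuclideanSpace ℂ n) : |z.im| * ‖x‖ ≤ ‖toEuclideanCLM (n := n) (𝕜 := ℂ) (A - z • 1) x‖ := by
  have := (isSymmetric_toEuclideanLin_iff.mpr hA).abs_im_mul_norm_le z x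
  rw [← coe_toEuclideanCLM_eq_toEuclideanLin, ContinuousLinearMap.coe_coe] at this
  simpa using this

theorem Matrix.IsHermitian.isUnit_det_sub_smul_one {A : Matrix n n ℂ} (hA : A.IsHermitian)
    {z : ℂ} (hz : z.im ≠ 0) : IsUnit (A - z • 1).det := by
  rw [isUnit_iff_ne_zero]
  intro hdet
  obtain ⟨v, hv, hAv⟩ := exists_mulVec_eq_zero_iff.mpr hdet
  have := hA.abs_im_mul_norm_le z (toLp 2 v)
  rw [toEuclideanCLM_toLp, hAv, toLp_zero, norm_zero] at this
  have : toLp 2 v = 0 := norm_le_zero_iff.mp <|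
    nonpos_of_mul_nonpos_right this (abs_pos.mpr hz)
  exact hv (by simpa using this)

theorem Matrix.IsHermitian.l2_opNorm_inv_sub_smul_one_le {A : Matrix n n ℂ} (hA : A.IsHermitian)
    {z : ℂ} (hz : z.im ≠ 0) : ‖(A - z • 1)⁻¹‖ ≤ |z.im|⁻¹ := by
  rw [← l2_opNorm_toEuclideanCLM]
  refine ContinuousLinearMap.opNorm_le_bound _ (by positivity) fun x => ?_
  have hinv : toEuclideanCLM (n := n) (𝕜 := ℂ) (A - z • 1)
      (toEuclideanCLM (n := n) (𝕜 := ℂ) (A - z • 1)⁻¹ x) = x := by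
    rw [← mul_apply_eq_comp, ← map_mul,
      mul_nonsing_inv _ (hA.isUnit_det_sub_smul_one hz), map_one,
      one_apply_eq_self]
  have := hA.abs_im_mul_norm_le z (toEuclideanCLM (n := n) (𝕜 := ℂ) (A - z • 1)⁻¹ x)
  rw [hinv] at this
  rw [inv_mul_eq_div, le_div_iff₀' (abs_pos.mpr hz)]
  exact this

theorem Matrix.sum_sum_norm_sq_le_card_mul_l2_opNorm_sq {m : Type*} [Fintype m]
    (X : Matrix m n ℂ) : ∑ i, ∑ j, ‖X i j‖ ^ 2 ≤ Fintype.card n * ‖X‖ ^ 2 := by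
  have hcol : ∀ j, ∑ i, ‖X i j‖ ^ 2 ≤ ‖X‖ ^ 2 := fun j => by
    have h := X.l2_opNorm_mulVec (EuclideanSpace.single j 1)
    rw [PiLp.norm_single, norm_one, mul_one] at h
    have hsq := pow_le_pow_left₀ (norm_nonneg _) h 2
    simpa [EuclideanSpace.norm_sq_eq, mulVec_single_one] using hsq
  calc ∑ i, ∑ j, ‖X i j‖ ^ 2 = ∑ j, ∑ i, ‖X i j‖ ^ 2 := Finset.sum_comm
    _ ≤ ∑ _j : n, ‖X‖ ^ 2 := sum_le_sum fun j _ => hcol j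
    _ = Fintype.card n * ‖X‖ ^ 2 := by simp

theorem Matrix.IsHermitian.norm_trace_inv_sub_smul_one_sub_le {A B : Matrix n n ℂ}
    (hA : A.IsHermitian) (hB : B.IsHermitian) {z : ℂ} (hz : z.im ≠ 0) :
    ‖trace (A - z • 1)⁻¹ - trace (B - z • 1)⁻¹‖ ≤
      √(Fintype.card n) / z.im ^ 2 * √(∑ i, ∑ j, ‖(A - B) i j‖ ^ 2) := by
  have hunit : IsUnit (A - z • 1) ↔ IsUnit (B - z • 1) := by
    simp only [isUnit_iff_isUnit_det, hA.isUnit_det_sub_smul_one hz,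
      hB.isUnit_det_sub_smul_one hz]
  have hRR : ‖(B - z • 1)⁻¹ * (A - z • 1)⁻¹‖ ≤ |z.im|⁻¹ * |z.im|⁻¹ :=
    (l2_opNorm_mul _ _).trans <| mul_le_mul (hB.l2_opNorm_inv_sub_smul_one_le hz)
      (hA.l2_opNorm_inv_sub_smul_one_le hz) (norm_nonneg _) (by positivity)
  have hsq := ((B - z • 1)⁻¹ * (A - z • 1)⁻¹).sum_sum_norm_sq_le_card_mul_l2_opNorm_sq.trans
    (mul_le_mul_of_nonneg_left (pow_le_pow_left₀ (norm_nonneg _) hRR 2) (Nat.cast_nonneg _))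
  calc ‖trace (A - z • 1)⁻¹ - trace (B - z • 1)⁻¹‖
      = ‖trace ((B - A) * ((B - z • 1)⁻¹ * (A - z • 1)⁻¹))‖ := by
        rw [← trace_sub, inv_sub_inv hunit, trace_mul_cycle, trace_mul_comm]
        congr 3
        abel
    _ ≤ √(∑ i, ∑ j, ‖(A - B) i j‖ ^ 2) * √(Fintype.card n * (|z.im|⁻¹ * |z.im|⁻¹) ^ 2) := by
        refine (norm_trace_mul_le _ _).trans ?_
        simp only [sub_apply, norm_sub_rev (B _ _)]
        exact mul_le_mul_of_nonneg_left (Real.sqrt_le_sqrt hsq) (Real.sqrt_nonneg _)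
    _ = _ := by
        rw [Real.sqrt_mul (Nat.cast_nonneg _), Real.sqrt_sq (by positivity), ← mul_inv,
          abs_mul_abs_self, ← sq]
        ring

end HermitianResolvent

namespace Matrix

variable {m n o α : Type*} [Fintype m] [Fintype n] [Fintype o] [DecidableEq m] [DecidableEq n]
  [DecidableEq o] [CommRing α]

theorem inv_blockDiagonal (A : o → Matrix m m α) (hA : ∀ k, IsUnit (A k).det) :
    (blockDiagonal A)⁻¹ = blockDiagonal fun k => (A k)⁻¹ := by
  refine inv_eq_right_inv ?_
  rw [← blockDiagonal_mul]
  convert blockDiagonal_one with k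
  exact mul_nonsing_inv _ (hA k)

theorem trace_inv_blockDiagonal (A : o → Matrix m m α) (hA : ∀ k, IsUnit (A k).det) :
    trace (blockDiagonal A)⁻¹ = ∑ k, trace (A k)⁻¹ := by
  rw [inv_blockDiagonal A hA, trace_blockDiagonal]

theorem trace_inv_reindex (e : m ≃ n) (A : Matrix m m α) :
    trace (reindex e e A)⁻¹ = trace A⁻¹ := by
  rw [inv_reindex, reindex_apply, trace, trace]
  exact Equiv.sum_comp e.symm fun i => A⁻¹ i i

end Matrix

def blockEquiv {B K n : ℕ} (h : K * B = n) : Fin B × Fin K ≃ Fin n :=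
  (Equiv.prodComm _ _).trans (finProdFinEquiv.trans (finCongr h))

@[simp] theorem blockEquiv_apply_val {B K n : ℕ} (h : K * B = n) (x : Fin B × Fin K) :
    (blockEquiv h x : ℕ) = x.1 + B * x.2 := rfl

@[simp] theorem blockEquiv_symm_apply_snd_val {B K n : ℕ} (h : K * B = n) (i : Fin n) :
    (((blockEquiv h).symm i).2 : ℕ) = (i : ℕ) / B := rfl

@[simp] theorem blockEquiv_symm_apply_fst_val {B K n : ℕ} (h : K * B = n) (i : Fin n) :
    (((blockEquiv h).symm i).1 : ℕ) = (i : ℕ) % B := rfl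

def blockPart {n : ℕ} (B : ℕ) (H : Matrix (Fin n) (Fin n) ℝ) : Matrix (Fin n) (Fin n) ℝ :=
  Matrix.of fun i j => if (i : ℕ) / B = (j : ℕ) / B then H i j else 0

theorem Matrix.IsSymm.blockPart {n B : ℕ} {H : Matrix (Fin n) (Fin n) ℝ} (hH : H.IsSymm) :
    (blockPart B H).IsSymm := by
  refine IsSymm.ext fun i j => ?_
  simp only [_root_.blockPart, of_apply, eq_comm (a := (j : ℕ) / B), hH.apply i j]

theorem blockPart_eq_reindex_blockDiagonal {B K n : ℕ} (h : K * B = n)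
    (H : Matrix (Fin n) (Fin n) ℝ) :
    blockPart B H = reindex (blockEquiv h) (blockEquiv h)
      (blockDiagonal fun p =>
        H.submatrix (fun q => blockEquiv h (q, p)) (fun q => blockEquiv h (q, p))) := by
  ext i j
  simp only [blockPart, of_apply, reindex_apply, submatrix_apply,
    blockDiagonal_apply, Fin.ext_iff, blockEquiv_symm_apply_snd_val]
  split_ifs with hij
  · rw [show (((blockEquiv h).symm j).1, ((blockEquiv h).symm i).2) = (blockEquiv h).symm j from
      Prod.ext rfl (Fin.ext hij), Prod.mk.eta, Equiv.apply_symm_apply, Equiv.apply_symm_apply]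
  · rfl

theorem blockSub_eq_submatrix {N B K : ℕ} (h : K * B = 2 * N + 1)
    (H : Matrix (Fin (2 * N + 1)) (Fin (2 * N + 1)) ℝ) (p : Fin K) :
    blockSub N B p H =
      H.submatrix (fun q => blockEquiv h (q, p)) (fun q => blockEquiv h (q, p)) := by
  have hlt : ∀ q : Fin B, (p * B + q : ℕ) % (2 * N + 1) = q + B * p := fun q => by
    rw [Nat.mod_eq_of_lt (by simpa [Nat.mul_comm, Nat.add_comm] using (blockEquiv h (q, p)).isLt)]
    ring
  ext q r
  simp only [blockSub, of_apply, submatrix_apply]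
  congr 1 <;> ext <;> simp [hlt]

theorem Matrix.IsSymm.isHermitian_map_ofReal {ι : Type*} {M : Matrix ι ι ℝ} (hM : M.IsSymm) :
    (M.map ((↑) : ℝ → ℂ)).IsHermitian :=
  (isHermitian_iff_isSymm.mpr hM).map _ fun x => (Complex.conj_ofReal x).symm

theorem abs_imTrResolvent_sub_le {n : ℕ} {M D : Matrix (Fin n) (Fin n) ℝ} (hM : M.IsSymm)
    (hD : D.IsSymm) {z : ℂ} (hz : z.im ≠ 0) :
    |imTrResolvent M z - imTrResolvent D z| ≤
      √n / z.im ^ 2 * √(∑ i, ∑ j, (M i j - D i j) ^ 2) := by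
  have h := hM.isHermitian_map_ofReal.norm_trace_inv_sub_smul_one_sub_le
    hD.isHermitian_map_ofReal hz
  simp only [Matrix.sub_apply, map_apply, ← Complex.ofReal_sub, Complex.norm_real, Real.norm_eq_abs,
    sq_abs, Fintype.card_fin] at h
  rw [imTrResolvent, imTrResolvent, ← Complex.sub_im]
  exact (Complex.abs_im_le_norm _).trans h

theorem sum_imTrResolvent_blockSub {N B K : ℕ} (h : K * B = 2 * N + 1)
    {H : Matrix (Fin (2 * N + 1)) (Fin (2 * N + 1)) ℝ} (hH : H.IsSymm) {z : ℂ} (hz : z.im ≠ 0) :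
    ∑ p ∈ range K, imTrResolvent (blockSub N B p H) z =
      imTrResolvent (blockPart B H) z := by
  set e := blockEquiv h
  set M : Fin K → Matrix (Fin B) (Fin B) ℝ := fun p =>
    H.submatrix (fun q => e (q, p)) (fun q => e (q, p))
  have hres : (reindex e e (blockDiagonal M)).map ((↑) : ℝ → ℂ) - z • 1 =
      reindex e e (blockDiagonal fun p => (M p).map ((↑) : ℝ → ℂ) - z • 1) := by
    ext i j
    obtain ⟨⟨q, p⟩, rfl⟩ := e.surjective i
    obtain ⟨⟨r, p'⟩, rfl⟩ := e.surjective j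
    by_cases hp : p = p' <;> simp [blockDiagonal_apply, one_apply, hp]
  have hunit : ∀ p, IsUnit ((M p).map ((↑) : ℝ → ℂ) - z • 1).det := fun p =>
    (hH.submatrix _).isHermitian_map_ofReal.isUnit_det_sub_smul_one hz
  rw [← Fin.sum_univ_eq_sum_range, imTrResolvent, blockPart_eq_reindex_blockDiagonal h, hres,
    trace_inv_reindex, trace_inv_blockDiagonal _ hunit, Complex.im_sum]
  exact sum_congr rfl fun p _ => by rw [blockSub_eq_submatrix h]; rfl

theorem Nat.div_eq_div_of_le_mod {B L i j : ℕ} (hL : L ≤ i % B) (hB : i % B + L < B)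
    (hij : i ≤ j + L) (hji : j ≤ i + L) : j / B = i / B := by
  have := Nat.div_add_mod i B
  rw [Nat.mul_comm] at this
  apply Nat.div_eq_of_lt_le <;> nlinarith

theorem card_filter_mod_lt_or_le_mod_add_le {B K n : ℕ} (h : K * B = n) (L : ℕ) :
    #{i : Fin n | (i : ℕ) % B < L ∨ B ≤ (i : ℕ) % B + L} ≤ K * (2 * L) := by
  have hrow : #{q : Fin B | (q : ℕ) < L ∨ B ≤ q + L} ≤ 2 * L := by
    rw [← card_map Fin.valEmbedding]
    calc _ ≤ #(range L ∪ Ico (B - L) B) := card_le_card fun q hq => by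
            simp only [Finset.mem_map, mem_filter, mem_univ, true_and, Fin.valEmbedding_apply] at hq
            obtain ⟨q, hq, rfl⟩ := hq
            simp only [mem_union, mem_range, mem_Ico]
            omega
      _ ≤ L + L := (card_union_le _ _).trans (by simp only [card_range, Nat.card_Ico]; omega)
      _ = 2 * L := by ring
  calc #{i : Fin n | (i : ℕ) % B < L ∨ B ≤ (i : ℕ) % B + L}
      = #{x : Fin B × Fin K | (x.1 : ℕ) < L ∨ B ≤ x.1 + L} :=
        card_equiv (blockEquiv h).symm (by simp)
    _ = #{q : Fin B | (q : ℕ) < L ∨ B ≤ q + L} * K := by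
        rw [← univ_product_univ,
          filter_product_left fun q : Fin B => (q : ℕ) < L ∨ B ≤ q + L, card_product, card_univ,
          Fintype.card_fin]
    _ ≤ K * (2 * L) := by rw [Nat.mul_comm]; exact Nat.mul_le_mul_left K hrow

theorem card_filter_abs_sub_le {n : ℕ} (i : Fin n) (L : ℕ) :
    #{j : Fin n | |(i : ℤ) - j| ≤ L} ≤ 2 * L + 1 := by
  calc #{j : Fin n | |(i : ℤ) - j| ≤ L} ≤ #(Icc ((i : ℤ) - L) (i + L)) :=
        card_le_card_of_injOn (fun j => (j : ℤ)) (fun j hj => by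
          rw [mem_coe, mem_filter] at hj
          rw [coe_Icc, Set.mem_Icc]
          constructor <;> linarith [abs_le.mp hj.2])
          (fun j _ k _ hjk => Fin.ext (by simpa using hjk))
    _ = 2 * L + 1 := by rw [Int.card_Icc]; omega

theorem card_offBlock_band_le {B K n : ℕ} (h : K * B = n) (L : ℕ) :
    #{x : Fin n × Fin n | (x.1 : ℕ) / B ≠ (x.2 : ℕ) / B ∧ |(x.1 : ℤ) - x.2| ≤ L} ≤
      K * (2 * L) * (2 * L + 1) := by
  set near : Finset (Fin n) := {i | (i : ℕ) % B < L ∨ B ≤ (i : ℕ) % B + L}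
  calc _ ≤ #((near ×ˢ univ).filter fun x : Fin n × Fin n => |(x.1 : ℤ) - x.2| ≤ L) := by
        refine card_le_card fun x hx => ?_
        simp only [mem_filter, mem_univ, true_and, and_true, mem_product, near] at hx ⊢
        refine ⟨?_, hx.2⟩
        by_contra hfar
        obtain ⟨hL, hB⟩ := not_or.mp hfar
        have := abs_le.mp hx.2
        exact hx.1 (Nat.div_eq_div_of_le_mod (not_lt.mp hL) (not_le.mp hB) (by omega)
          (by omega)).symm
    _ = ∑ i ∈ near, #{j : Fin n | |(i : ℤ) - j| ≤ L} := by
        rw [card_filter, sum_product]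
        simp only [card_filter]
    _ ≤ ∑ _i ∈ near, (2 * L + 1) := sum_le_sum fun i _ => card_filter_abs_sub_le i L
    _ ≤ K * (2 * L) * (2 * L + 1) := by
        rw [sum_const, smul_eq_mul]
        exact Nat.mul_le_mul_right _ (card_filter_mod_lt_or_le_mod_add_le h L)

theorem idx_sub_idx (N : ℕ) (i j : Fin (2 * N + 1)) : idx N i - idx N j = (i : ℤ) - j := by
  simp only [idx]
  ring

theorem bandMatrix_isSymm {X : ℤ → ℤ → ℝ} (hX : ∀ i j, X i j = X j i) (N L : ℕ) :
    (bandMatrix X N L).IsSymm :=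
  IsSymm.ext fun i j => by
    simp only [bandMatrix, of_apply, abs_sub_comm (idx N j), hX (idx N j)]

def offBlockNormSq {n : ℕ} (B : ℕ) (H : Matrix (Fin n) (Fin n) ℝ) : ℝ :=
  ∑ i : Fin n, ∑ j : Fin n, if (i : ℕ) / B = (j : ℕ) / B then 0 else H i j ^ 2

theorem offBlockNormSq_nonneg {n : ℕ} (B : ℕ) (H : Matrix (Fin n) (Fin n) ℝ) :
    0 ≤ offBlockNormSq B H :=
  sum_nonneg fun _ _ => sum_nonneg fun _ _ => by split_ifs <;> positivity

theorem abs_imTrResolvent_sub_sum_blockSub_le {N B : ℕ} (hB : B ∣ 2 * N + 1)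
    {H : Matrix (Fin (2 * N + 1)) (Fin (2 * N + 1)) ℝ} (hH : H.IsSymm) {z : ℂ} (hz : z.im ≠ 0) :
    |imTrResolvent H z - ∑ p ∈ range ((2 * N + 1) / B), imTrResolvent (blockSub N B p H) z| ≤
      √(2 * N + 1) / z.im ^ 2 * √(offBlockNormSq B H) := by
  rw [sum_imTrResolvent_blockSub (Nat.div_mul_cancel hB) hH hz]
  refine (abs_imTrResolvent_sub_le hH hH.blockPart hz).trans_eq ?_
  push_cast
  congr 2
  refine sum_congr rfl fun i _ => sum_congr rfl fun j _ => ?_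
  simp only [blockPart, of_apply]
  split_ifs <;> ring

section Moments

variable {Ω : Type*} [MeasurableSpace Ω] {P : Measure Ω}

theorem MeasureTheory.Integrable.sqrt [IsFiniteMeasure P] {f : Ω → ℝ} (hf : Integrable f P) :
    Integrable (fun ω => √(f ω)) P := by
  refine ((hf.abs.add (integrable_const 1))).mono' hf.aemeasurable.sqrt.aestronglyMeasurable
    (Eventually.of_forall fun ω => ?_)
  show ‖√(f ω)‖ ≤ |f ω| + 1
  rw [Real.norm_eq_abs, abs_of_nonneg (Real.sqrt_nonneg _)]
  refine Real.sqrt_le_iff.mpr ⟨by positivity, ?_⟩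
  nlinarith [le_abs_self (f ω), abs_nonneg (f ω)]

theorem integral_sqrt_le_sqrt_integral [IsProbabilityMeasure P] {f : Ω → ℝ} (hf0 : 0 ≤ f)
    (hf : Integrable f P) : ∫ ω, √(f ω) ∂P ≤ √(∫ ω, f ω ∂P) :=
  Real.strictConcaveOn_sqrt.concaveOn.le_map_integral Real.continuous_sqrt.continuousOn
    isClosed_Ici (Eventually.of_forall hf0) hf hf.sqrt

theorem abs_integral_le_mul_sqrt_integral [IsProbabilityMeasure P] {F S : Ω → ℝ} {c : ℝ}
    (hc : 0 ≤ c) (hS0 : 0 ≤ S) (hS : Integrable S P) (hFS : ∀ ω, |F ω| ≤ c * √(S ω)) :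
    |∫ ω, F ω ∂P| ≤ c * √(∫ ω, S ω ∂P) :=
  calc |∫ ω, F ω ∂P| ≤ ∫ ω, |F ω| ∂P := abs_integral_le_integral_abs
    _ ≤ ∫ ω, c * √(S ω) ∂P := integral_mono_of_nonneg (Eventually.of_forall fun _ =>
        abs_nonneg _) (hS.sqrt.const_mul c) (Eventually.of_forall hFS)
    _ = c * ∫ ω, √(S ω) ∂P := integral_const_mul c _
    _ ≤ c * √(∫ ω, S ω ∂P) := mul_le_mul_of_nonneg_left (integral_sqrt_le_sqrt_integral hS0 hS) hc

theorem integrable_sq_and_integral_sq_eq {X : Ω → ℤ → ℤ → ℝ} (hsym : ∀ ω i j, X ω i j = X ω j i)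
    (hmeas : ∀ i j, Measurable fun ω => X ω i j)
    (hident : ∀ i j : ℤ, i ≤ j → P.map (fun ω => X ω i j) = P.map (fun ω => X ω 0 0))
    (hvar : ∫ ω, (X ω 0 0) ^ 2 ∂P = 1) (hsq : Integrable (fun ω => (X ω 0 0) ^ 2) P) (i j : ℤ) :
    Integrable (fun ω => (X ω i j) ^ 2) P ∧ ∫ ω, (X ω i j) ^ 2 ∂P = 1 := by
  wlog hij : i ≤ j generalizing i j
  · simpa only [hsym _ i j] using this j i (le_of_not_ge hij)
  have hid : IdentDistrib (fun ω => X ω i j) (fun ω => X ω 0 0) P P :=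
    ⟨(hmeas i j).aemeasurable, (hmeas 0 0).aemeasurable, hident i j hij⟩
  exact ⟨hid.sq.integrable_iff.mpr hsq, hid.sq.integral_eq.trans hvar⟩

variable {X : Ω → ℤ → ℤ → ℝ}

theorem integral_bandMatrix_sq
    (hX : ∀ i j, Integrable (fun ω => X ω i j ^ 2) P ∧ ∫ ω, X ω i j ^ 2 ∂P = 1)
    (N L : ℕ) (i j : Fin (2 * N + 1)) :
    Integrable (fun ω => bandMatrix (X ω) N L i j ^ 2) P ∧
      ∫ ω, bandMatrix (X ω) N L i j ^ 2 ∂P =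
        if |idx N i - idx N j| ≤ L then (2 * L + 1 : ℝ)⁻¹ else 0 := by
  by_cases hband : |idx N i - idx N j| ≤ L
  · have hentry : (fun ω => bandMatrix (X ω) N L i j ^ 2) =
        fun ω => X ω (idx N i) (idx N j) ^ 2 / (2 * L + 1) := by
      funext ω
      rw [bandMatrix, of_apply, if_pos hband, div_pow, Real.sq_sqrt (by positivity)]
    rw [hentry, if_pos hband, integral_div, (hX _ _).2, one_div]
    exact ⟨(hX _ _).1.div_const _, rfl⟩
  · simp [bandMatrix, hband]

theorem integral_offBlockNormSq_bandMatrix_le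
    (hX : ∀ i j, Integrable (fun ω => X ω i j ^ 2) P ∧ ∫ ω, X ω i j ^ 2 ∂P = 1)
    {N B K : ℕ} (h : K * B = 2 * N + 1) (L : ℕ) :
    Integrable (fun ω => offBlockNormSq B (bandMatrix (X ω) N L)) P ∧
      ∫ ω, offBlockNormSq B (bandMatrix (X ω) N L) ∂P ≤ K * (2 * L) := by
  have hint : ∀ i j : Fin (2 * N + 1), Integrable (fun ω =>
      if (i : ℕ) / B = (j : ℕ) / B then 0 else bandMatrix (X ω) N L i j ^ 2) P := fun i j => by
    split_ifs
    exacts [integrable_zero _ _ _, (integral_bandMatrix_sq hX N L i j).1]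
  refine ⟨integrable_finsetSum _ fun i _ => integrable_finsetSum _ fun j _ => hint i j, ?_⟩
  calc ∫ ω, offBlockNormSq B (bandMatrix (X ω) N L) ∂P
      = ∑ x : Fin (2 * N + 1) × Fin (2 * N + 1),
          if (x.1 : ℕ) / B ≠ (x.2 : ℕ) / B ∧ |(x.1 : ℤ) - x.2| ≤ L then (2 * L + 1 : ℝ)⁻¹
          else 0 := by
        simp only [offBlockNormSq]
        rw [integral_finsetSum _ fun i _ => integrable_finsetSum _ fun j _ => hint i j,
          Fintype.sum_prod_type]
        refine sum_congr rfl fun i _ => ?_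
        rw [integral_finsetSum _ fun j _ => hint i j]
        refine sum_congr rfl fun j _ => ?_
        rw [← idx_sub_idx N]
        split_ifs with hij hband hband <;>
          simp_all [(integral_bandMatrix_sq hX N L i j).2]
    _ = #{x : Fin (2 * N + 1) × Fin (2 * N + 1) |
          (x.1 : ℕ) / B ≠ (x.2 : ℕ) / B ∧ |(x.1 : ℤ) - x.2| ≤ L} * (2 * L + 1 : ℝ)⁻¹ := by
        rw [sum_ite, sum_const_zero, add_zero, sum_const, nsmul_eq_mul]
    _ ≤ (K * (2 * L) * (2 * L + 1) : ℕ) * (2 * L + 1 : ℝ)⁻¹ :=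
        mul_le_mul_of_nonneg_right (by exact_mod_cast card_offBlock_band_le h L) (by positivity)
    _ = K * (2 * L) := by
        push_cast
        field_simp

theorem abs_inv_mul_integral_imTrResolvent_sub_sum_blockSub_le [IsProbabilityMeasure P]
    (hsym : ∀ ω i j, X ω i j = X ω j i)
    (hX : ∀ i j, Integrable (fun ω => X ω i j ^ 2) P ∧ ∫ ω, X ω i j ^ 2 ∂P = 1)
    {N B : ℕ} (hB : B ∣ 2 * N + 1) (L : ℕ) {z : ℂ} (hz : z.im ≠ 0) :
    |(2 * (N : ℝ) + 1)⁻¹ * ∫ ω, (imTrResolvent (bandMatrix (X ω) N L) z -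
        ∑ p ∈ range ((2 * N + 1) / B), imTrResolvent (blockSub N B p (bandMatrix (X ω) N L)) z) ∂P|
      ≤ √(((2 * N + 1) / B : ℕ) * (2 * L : ℝ) / (2 * N + 1)) / z.im ^ 2 := by
  obtain ⟨hint, hle⟩ := integral_offBlockNormSq_bandMatrix_le hX (Nat.div_mul_cancel hB) L
  have hn : (0 : ℝ) < 2 * N + 1 := by positivity
  have hF := abs_integral_le_mul_sqrt_integral (by positivity)
    (fun ω => offBlockNormSq_nonneg B _) hint fun ω =>
      abs_imTrResolvent_sub_sum_blockSub_le hB (bandMatrix_isSymm (hsym ω) N L) hz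
  rw [abs_mul, abs_inv, abs_of_pos hn, Real.sqrt_div' _ hn.le]
  calc _ ≤ (2 * (N : ℝ) + 1)⁻¹ * (√(2 * N + 1) / z.im ^ 2 * √(((2 * N + 1) / B : ℕ) * (2 * L))) :=
        mul_le_mul_of_nonneg_left (hF.trans (by gcongr)) (by positivity)
    _ = _ := by
        field_simp
        rw [Real.sq_sqrt hn.le]

end Moments

open Topology

theorem tendsto_numBlocks_mul_bandWidth_div {α β : ℝ} (hαβ : α < β) :
    Tendsto (fun N : ℕ => ((2 * N + 1) / (2 * ⌊(N : ℝ) ^ β⌋₊ + 1) : ℕ) * (2 * bandL α N : ℝ) /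
      (2 * N + 1)) atTop (𝓝 0) := by
  have hpow : Tendsto (fun N : ℕ => 2 * (N : ℝ) ^ (α - β)) atTop (𝓝 0) := by
    simpa [neg_sub] using ((tendsto_rpow_neg_atTop (sub_pos.mpr hαβ)).comp
      tendsto_natCast_atTop_atTop).const_mul 2
  refine squeeze_zero' (Eventually.of_forall fun N => by positivity) ?_ hpow
  filter_upwards [eventually_ge_atTop 1] with N hN
  have hN0 : (0 : ℝ) < N := by exact_mod_cast hN
  have hn : (0 : ℝ) < 2 * N + 1 := by positivity
  have hB : (N : ℝ) ^ β ≤ 2 * ⌊(N : ℝ) ^ β⌋₊ + 1 := by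
    linarith [Nat.lt_floor_add_one ((N : ℝ) ^ β), (Nat.floor ((N : ℝ) ^ β)).cast_nonneg (α := ℝ)]
  have hK : (((2 * N + 1) / (2 * ⌊(N : ℝ) ^ β⌋₊ + 1) : ℕ) : ℝ) ≤ (2 * N + 1) / (N : ℝ) ^ β :=
    Nat.cast_div_le.trans <| by
      push_cast
      exact div_le_div_of_nonneg_left hn.le (by positivity) hB
  have hL : (bandL α N : ℝ) ≤ (N : ℝ) ^ α := Nat.floor_le (by positivity)
  rw [div_le_iff₀ hn, Real.rpow_sub hN0]
  calc _ ≤ (2 * N + 1) / (N : ℝ) ^ β * (2 * (N : ℝ) ^ α) :=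
        mul_le_mul hK (by linarith) (by positivity) (by positivity)
    _ = 2 * ((N : ℝ) ^ α / (N : ℝ) ^ β) * (2 * N + 1) := by ring

open MeasureTheory ProbabilityTheory Filter in
theorem statement_11_general
    {Ω : Type*} [MeasurableSpace Ω] (P : Measure Ω) [IsProbabilityMeasure P]
    (α β : ℝ) (hαβ : α < β)
    (X : Ω → ℤ → ℤ → ℝ)
    (hsym : ∀ ω i j, X ω i j = X ω j i)
    (hmeas : ∀ i j, Measurable fun ω => X ω i j)
    (hident : ∀ i j : ℤ, i ≤ j → P.map (fun ω => X ω i j) = P.map (fun ω => X ω 0 0))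
    (hvar : ∫ ω, (X ω 0 0) ^ 2 ∂P = 1)
    (hmom : ∀ k : ℕ, Integrable (fun ω => |X ω 0 0| ^ k) P)
    (z : ℂ) (hz : 0 < z.im) :
    Tendsto
      (fun N : ℕ =>
        (2 * (N : ℝ) + 1)⁻¹ *
          ∫ ω, (imTrResolvent (bandMatrix (X ω) N (bandL α N)) z
            - ∑ p ∈ Finset.range ((2 * N + 1) / (2 * Nat.floor ((N : ℝ) ^ β) + 1)),
                imTrResolvent
                  (blockSub N (2 * Nat.floor ((N : ℝ) ^ β) + 1) p
                    (bandMatrix (X ω) N (bandL α N))) z) ∂P)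
      (atTop ⊓ 𝓟 {N : ℕ | (2 * Nat.floor ((N : ℝ) ^ β) + 1) ∣ (2 * N + 1)})
      (nhds 0) := by
  have hX := integrable_sq_and_integral_sq_eq hsym hmeas hident hvar (by simpa using hmom 2)
  have hbound : Tendsto (fun N : ℕ => √(((2 * N + 1) / (2 * ⌊(N : ℝ) ^ β⌋₊ + 1) : ℕ) *
      (2 * bandL α N : ℝ) / (2 * N + 1)) / z.im ^ 2) atTop (nhds 0) := by
    simpa using (tendsto_numBlocks_mul_bandWidth_div hαβ).sqrt.div_const (z.im ^ 2)
  refine squeeze_zero_norm' ?_ (hbound.mono_left inf_le_left)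
  rw [eventually_inf_principal]
  exact Eventually.of_forall fun N hB =>
    abs_inv_mul_integral_imTrResolvent_sub_sum_blockSub_le hsym hX hB (bandL α N) hz.ne'

open MeasureTheory ProbabilityTheory Filter in
/-- For the random band matrix `H_L^N` with `L = ⌊N^α⌋`, assuming the
localization estimate `[H2]` with exponents `μ` and `σ`, and `β` with `αμ < β < 1`,
`α < β`: for every `z ∈ ℂ` with `Im z > 0`,
`(2N+1)⁻¹ 𝔼[Im Tr (H_L^N - z)⁻¹ - Σ_{p=1}^{N_β} Im Tr (H_L^{p,N} - z)⁻¹] → 0` as `N → ∞`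
(along those `N` for which `2⌊N^β⌋+1` divides `2N+1`, so that the `N_β` blocks of size
`2⌊N^β⌋+1` exactly partition `{-N,…,N}`). -/
theorem statement_11
    {Ω : Type*} [MeasurableSpace Ω] (P : Measure Ω) [IsProbabilityMeasure P]
    (α β μ σ : ℝ) (hα0 : 0 ≤ α) (hαμβ : α * μ < β) (hαβ : α < β) (hβ1 : β < 1)
    (X : Ω → ℤ → ℤ → ℝ)
    (hsym : ∀ ω i j, X ω i j = X ω j i)
    (hmeas : ∀ i j, Measurable fun ω => X ω i j)
    (hindep : iIndepFun
      (fun p : {p : ℤ × ℤ // p.1 ≤ p.2} => fun ω => X ω p.1.1 p.1.2) P)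
    (hident : ∀ i j : ℤ, i ≤ j → P.map (fun ω => X ω i j) = P.map (fun ω => X ω 0 0))
    (hmean : ∫ ω, X ω 0 0 ∂P = 0)
    (hvar : ∫ ω, (X ω 0 0) ^ 2 ∂P = 1)
    (hmom : ∀ k : ℕ, Integrable (fun ω => |X ω 0 0| ^ k) P)
    (hloc : ∀ ρ : ℝ, 0 < ρ → ∀ s ∈ Set.Ioo (0 : ℝ) 1,
      ∃ C, 0 < C ∧ ∃ A, 0 < A ∧
        ∀ N : ℕ, 1 ≤ N → ∀ j k : Fin (2 * N + 1), ∀ E ∈ Set.Icc (-ρ) ρ,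
          ∫ ω, |((bandMatrix (X ω) N (bandL α N)
              - E • (1 : Matrix (Fin (2 * N + 1)) (Fin (2 * N + 1)) ℝ))⁻¹) j k| ^ s ∂P
            ≤ C * (N : ℝ) ^ (s * α * σ)
              * Real.exp (-A * |((idx N j : ℝ)) - ((idx N k : ℝ))| / (N : ℝ) ^ (α * μ)))
    (z : ℂ) (hz : 0 < z.im) :
    Tendsto
      (fun N : ℕ =>
        (2 * (N : ℝ) + 1)⁻¹ *
          ∫ ω, (imTrResolvent (bandMatrix (X ω) N (bandL α N)) z
            - ∑ p ∈ Finset.range ((2 * N + 1) / (2 * Nat.floor ((N : ℝ) ^ β) + 1)),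
                imTrResolvent
                  (blockSub N (2 * Nat.floor ((N : ℝ) ^ β) + 1) p
                    (bandMatrix (X ω) N (bandL α N))) z) ∂P)
      (atTop ⊓ 𝓟 {N : ℕ | (2 * Nat.floor ((N : ℝ) ^ β) + 1) ∣ (2 * N + 1)})
      (nhds 0) :=
  statement_11_general P α β hαβ X hsym hmeas hident hvar hmom z hz
end
end
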